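/- arXiv:1106.3885 — 2 statements merged into one kernel-verified Lean document; each statement's English description precedes it below -/
import Mathlib

section
/- For k ∈ {1,2}, let μ_k ∈ ℝ, π_k ∈ (0,1), c_k > 0, and let ψ_k be a probability density on [-1,1] with characteristic transform ψ̂_k(t) = ∫_{-1}^1 e^{itu} ψ_k(u) du. Suppose that for every t ∈ ℝ: exp(itμ₁) ( π₁ + (1-π₁) ψ̂₁(c₁ t) ) = exp(itμ₂) ( π₂ + (1-π₂) ψ̂₂(c₂ t) ). Then π₁ = π₂ and μ₁ = μ₂. -/
open MeasureTheory Set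

/-- The characteristic transform of a density supported on `[-1,1]`:
`ψ̂(t) = ∫_{-1}^1 e^{itu} ψ(u) du`. -/
noncomputable def charTransformIcc (ψ : ℝ → ℝ) (t : ℝ) : ℂ :=
  ∫ u in Icc (-1 : ℝ) 1, Complex.exp (Complex.I * t * u) * (ψ u : ℂ)

/-!
Since `ψ̂(c t) → 0` as `|t| → ∞` (Riemann–Lebesgue), both bracketed factors tend to `π₁` and
`π₂`. The exponential prefactors have modulus one, so comparing moduli gives `π₁ = π₂ =: π > 0`;
dividing then gives `exp (i t (μ₁ - μ₂)) → π / π = 1`, which forces `μ₁ = μ₂` because a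
nonconstant character `t ↦ exp (i t δ)` has no limit at infinity.
-/

open Filter Topology Complex

theorem tendsto_integral_exp_I_mul_smul_cocompact {E : Type*} [NormedAddCommGroup E]
    [NormedSpace ℂ E] (f : ℝ → E) :
    Tendsto (fun t : ℝ => ∫ u : ℝ, exp (I * t * u) • f u) (cocompact ℝ) (𝓝 0) := by
  have h2π : (-(2 * Real.pi))⁻¹ ≠ 0 := by simp [Real.pi_ne_zero]
  convert (Real.tendsto_integral_exp_smul_cocompact f).comp
    (tendsto_cocompact_mul_left₀ h2π) using 2 with t
  refine integral_congr_ae (ae_of_all _ fun u => ?_)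
  simp only [Circle.smul_def, Real.fourierChar_apply]
  congr 2
  push_cast
  field_simp [Real.pi_ne_zero]

theorem charTransformIcc_tendsto_cocompact (ψ : ℝ → ℝ) :
    Tendsto (charTransformIcc ψ) (cocompact ℝ) (𝓝 0) := by
  convert tendsto_integral_exp_I_mul_smul_cocompact
    ((Icc (-1 : ℝ) 1).indicator fun u => (ψ u : ℂ)) using 2 with t
  rw [charTransformIcc, ← integral_indicator measurableSet_Icc]
  simp only [indicator_mul_right, smul_eq_mul]

theorem tendsto_add_mul_charTransformIcc_comp_mul_cocompact (p : ℝ) (ψ : ℝ → ℝ) {c : ℝ}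
    (hc : c ≠ 0) :
    Tendsto (fun t : ℝ => (p : ℂ) + (1 - p : ℝ) * charTransformIcc ψ (c * t))
      (cocompact ℝ) (𝓝 p) := by
  simpa using tendsto_const_nhds.add
    (((charTransformIcc_tendsto_cocompact ψ).comp (tendsto_cocompact_mul_left₀ hc)).const_mul
      ((1 - p : ℝ) : ℂ))

theorem norm_exp_I_mul_ofReal_mul_ofReal (t μ : ℝ) : ‖exp (I * t * μ)‖ = 1 := by
  rw [mul_assoc, ← ofReal_mul, norm_exp_I_mul_ofReal]

theorem eq_zero_of_tendsto_exp_I_mul_cocompact {δ : ℝ}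
    (h : Tendsto (fun t : ℝ => exp (I * t * δ)) (cocompact ℝ) (𝓝 1)) : δ = 0 := by
  have hperiod : ∀ s : ℝ, exp (I * s * δ) = 1 := by
    intro s
    have hshift : Tendsto (fun t : ℝ => exp (I * (t + s : ℝ) * δ)) (cocompact ℝ) (𝓝 1) :=
      h.comp (Homeomorph.addRight s).toCocompactMap.cocompact_tendsto'
    have hsplit : (fun t : ℝ => exp (I * (t + s : ℝ) * δ)) =
        fun t : ℝ => exp (I * t * δ) * exp (I * s * δ) := by
      funext t
      rw [← exp_add]
      push_cast
      ring_nf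
    rw [hsplit] at hshift
    simpa using tendsto_nhds_unique (h.mul_const (exp (I * s * δ))) hshift
  by_contra hδ
  have hδ' : (δ : ℂ) ≠ 0 := ofReal_ne_zero.mpr hδ
  have hhalf := hperiod (Real.pi / δ)
  rw [show I * (Real.pi / δ : ℝ) * δ = Real.pi * I by push_cast; field_simp, exp_pi_mul_I] at hhalf
  norm_num at hhalf

theorem eq_and_eq_of_exp_I_mul_mul_eq {A B : ℝ → ℂ} {a b μ₁ μ₂ : ℝ} (ha : 0 < a) (hb : 0 < b)
    (hA : Tendsto A (cocompact ℝ) (𝓝 a)) (hB : Tendsto B (cocompact ℝ) (𝓝 b))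
    (h : ∀ t : ℝ, exp (I * t * μ₁) * A t = exp (I * t * μ₂) * B t) :
    a = b ∧ μ₁ = μ₂ := by
  have hnorm : ∀ t, ‖A t‖ = ‖B t‖ := fun t => by
    simpa only [norm_mul, norm_exp_I_mul_ofReal_mul_ofReal, one_mul] using congrArg norm (h t)
  have hab : a = b := by
    have hlim := tendsto_nhds_unique hA.norm (hB.norm.congr fun t => (hnorm t).symm)
    rwa [norm_real, norm_real, Real.norm_of_nonneg ha.le, Real.norm_of_nonneg hb.le] at hlim
  subst hab
  refine ⟨rfl, sub_eq_zero.mp (eq_zero_of_tendsto_exp_I_mul_cocompact ?_)⟩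
  have ha' : (a : ℂ) ≠ 0 := ofReal_ne_zero.mpr ha.ne'
  have hquot : ∀ᶠ t in cocompact ℝ, B t / A t = exp (I * t * (μ₁ - μ₂ : ℝ)) := by
    filter_upwards [hA.eventually_ne ha'] with t ht
    rw [ofReal_sub, mul_sub, exp_sub, div_eq_div_iff ht (exp_ne_zero _), h t]
    ring
  simpa only [div_self ha'] using (hB.div hA ha').congr' hquot

theorem stmt7_general
    (μ₁ μ₂ π₁ π₂ c₁ c₂ : ℝ) (ψ₁ ψ₂ : ℝ → ℝ)
    (hπ₁ : π₁ ∈ Ioo (0 : ℝ) 1) (hπ₂ : π₂ ∈ Ioo (0 : ℝ) 1)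
    (hc₁ : 0 < c₁) (hc₂ : 0 < c₂)
    (heq : ∀ t : ℝ,
      Complex.exp (Complex.I * t * μ₁) *
          ((π₁ : ℂ) + (1 - π₁ : ℝ) * charTransformIcc ψ₁ (c₁ * t)) =
        Complex.exp (Complex.I * t * μ₂) *
          ((π₂ : ℂ) + (1 - π₂ : ℝ) * charTransformIcc ψ₂ (c₂ * t))) :
    π₁ = π₂ ∧ μ₁ = μ₂ :=
  eq_and_eq_of_exp_I_mul_mul_eq hπ₁.1 hπ₂.1
    (tendsto_add_mul_charTransformIcc_comp_mul_cocompact π₁ ψ₁ hc₁.ne')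
    (tendsto_add_mul_charTransformIcc_comp_mul_cocompact π₂ ψ₂ hc₂.ne') heq

theorem stmt7
    (μ₁ μ₂ π₁ π₂ c₁ c₂ : ℝ) (ψ₁ ψ₂ : ℝ → ℝ)
    (hπ₁ : π₁ ∈ Ioo (0 : ℝ) 1) (hπ₂ : π₂ ∈ Ioo (0 : ℝ) 1)
    (hc₁ : 0 < c₁) (hc₂ : 0 < c₂)
    (hψ₁m : Measurable ψ₁) (hψ₁nn : ∀ u, 0 ≤ ψ₁ u)
    (hψ₁supp : ∀ u, u ∉ Icc (-1 : ℝ) 1 → ψ₁ u = 0)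
    (hψ₁int : ∫ u in Icc (-1 : ℝ) 1, ψ₁ u = 1)
    (hψ₂m : Measurable ψ₂) (hψ₂nn : ∀ u, 0 ≤ ψ₂ u)
    (hψ₂supp : ∀ u, u ∉ Icc (-1 : ℝ) 1 → ψ₂ u = 0)
    (hψ₂int : ∫ u in Icc (-1 : ℝ) 1, ψ₂ u = 1)
    (heq : ∀ t : ℝ,
      Complex.exp (Complex.I * t * μ₁) *
          ((π₁ : ℂ) + (1 - π₁ : ℝ) * charTransformIcc ψ₁ (c₁ * t)) =
        Complex.exp (Complex.I * t * μ₂) *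
          ((π₂ : ℂ) + (1 - π₂ : ℝ) * charTransformIcc ψ₂ (c₂ * t))) :
    π₁ = π₂ ∧ μ₁ = μ₂ :=
  stmt7_general μ₁ μ₂ π₁ π₂ c₁ c₂ ψ₁ ψ₂ hπ₁ hπ₂ hc₁ hc₂ heq
end

section
/- Let μ ∈ ℝ, σ > 0, τ > 0, and let ψ be a probability density on [-1,1]. Define f₀(z) = φ_{μ,σ}(z) and f₁(z) = ∫_{-1}^1 φ_{μ+τσu,σ}(z) ψ(u) du. If there exists δ ∈ (0,1] with ∫_δ^1 ψ(u) du > 0, then the ratio f₁(z)/f₀(z) tends to +∞ as z → +∞. (Symmetrically, if ∫_{-1}^{-δ} ψ(u) du > 0, then f₁(z)/f₀(z) → +∞ as z → -∞; thus the non-null density f₁ has a heavier tail than the null density f₀.) -/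
open MeasureTheory Set Filter

/-- The `N(μ, σ²)` density. -/
noncomputable def gaussDen (μ σ z : ℝ) : ℝ :=
  (Real.sqrt (2 * Real.pi * σ ^ 2))⁻¹ * Real.exp (-(z - μ) ^ 2 / (2 * σ ^ 2))

/-!
After dividing by `φ_{μ,σ}(z)` and completing the square, the likelihood ratio becomes
`∫ exp (t u - τ² u² / 2) ψ(u) du` with `t = τ (z - μ) / σ`. On `[δ, 1]` the integrand is at least
`exp (t δ - τ² / 2) ψ(u)`, so the ratio grows like `exp (t δ)` as soon as `ψ` charges `[δ, 1]`;
the case `z → -∞` is the same argument after the reflection `u ↦ -u`.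
-/

lemma gaussDen_add (μ a σ z : ℝ) :
    gaussDen (μ + a) σ z =
      gaussDen μ σ z * Real.exp ((2 * a * (z - μ) - a ^ 2) / (2 * σ ^ 2)) := by
  unfold gaussDen
  rw [mul_assoc _ (Real.exp _), ← Real.exp_add]
  congr 2
  ring

lemma setIntegral_gaussDen_mul_div_gaussDen {σ : ℝ} (hσ : σ ≠ 0) (μ τ z : ℝ) (s : Set ℝ)
    (ψ : ℝ → ℝ) :
    (∫ u in s, gaussDen (μ + τ * σ * u) σ z * ψ u) / gaussDen μ σ z =
      ∫ u in s, Real.exp (τ * (z - μ) / σ * u + -(τ * u) ^ 2 / 2) * ψ u := by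
  have hg : gaussDen μ σ z ≠ 0 := by unfold gaussDen; positivity
  rw [← integral_div]
  congr 1 with u
  rw [gaussDen_add, mul_assoc, mul_div_cancel_left₀ _ hg]
  congr 3
  field_simp
  ring

lemma tendsto_setIntegral_exp_mul_add_atTop {s A : Set ℝ} {g h k : ℝ → ℝ} {δ : ℝ}
    (hs : IsCompact s) (hh : Continuous h) (hk : Continuous k) (hg : IntegrableOn g s)
    (hg0 : ∀ u ∈ s, 0 ≤ g u) (hA : MeasurableSet A) (hAs : A ⊆ s) (hδ : 0 < δ)
    (hAδ : ∀ u ∈ A, δ ≤ h u) (hAg : 0 < ∫ u in A, g u) :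
    Tendsto (fun t => ∫ u in s, Real.exp (t * h u + k u) * g u) atTop atTop := by
  obtain ⟨c, hc⟩ : BddBelow (k '' s) := hs.bddBelow_image hk.continuousOn
  have hint : ∀ t, IntegrableOn (fun u => Real.exp (t * h u + k u) * g u) s := fun t =>
    hg.continuousOn_mul (by fun_prop) hs
  have hlow : ∀ t, 0 ≤ t →
      Real.exp (t * δ + c) * ∫ u in A, g u ≤ ∫ u in s, Real.exp (t * h u + k u) * g u := by
    intro t ht
    calc Real.exp (t * δ + c) * ∫ u in A, g u
        = ∫ u in A, Real.exp (t * δ + c) * g u := (integral_const_mul _ _).symm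
      _ ≤ ∫ u in A, Real.exp (t * h u + k u) * g u := by
        refine setIntegral_mono_on ((hg.mono_set hAs).const_mul _) ((hint t).mono_set hAs) hA
          fun u hu => mul_le_mul_of_nonneg_right ?_ (hg0 u (hAs hu))
        gcongr
        · exact hAδ u hu
        · exact hc (mem_image_of_mem k (hAs hu))
      _ ≤ ∫ u in s, Real.exp (t * h u + k u) * g u :=
        setIntegral_mono_set (hint t)
          (ae_restrict_of_forall_mem hs.measurableSet fun u hu =>
            mul_nonneg (Real.exp_nonneg _) (hg0 u hu))
          hAs.eventuallyLE
  have hgrow : Tendsto (fun t => Real.exp (t * δ + c) * ∫ u in A, g u) atTop atTop :=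
    (Real.tendsto_exp_atTop.comp
      (tendsto_atTop_add_const_right _ c (tendsto_id.atTop_mul_const hδ))).atTop_mul_const hAg
  exact tendsto_atTop_mono' atTop ((eventually_ge_atTop 0).mono hlow) hgrow

theorem stmt10_general
    (μ σ τ : ℝ) (hσ : 0 < σ) (hτ : 0 < τ) (ψ : ℝ → ℝ)
    (hψnn : ∀ u, 0 ≤ ψ u)
    (hψint : ∫ u in Icc (-1 : ℝ) 1, ψ u = 1) :
    ((∃ δ, δ ∈ Ioc (0 : ℝ) 1 ∧ 0 < ∫ u in Icc δ 1, ψ u) →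
      Tendsto
        (fun z => (∫ u in Icc (-1 : ℝ) 1, gaussDen (μ + τ * σ * u) σ z * ψ u) /
          gaussDen μ σ z) atTop atTop) ∧
    ((∃ δ, δ ∈ Ioc (0 : ℝ) 1 ∧ 0 < ∫ u in Icc (-1 : ℝ) (-δ), ψ u) →
      Tendsto
        (fun z => (∫ u in Icc (-1 : ℝ) 1, gaussDen (μ + τ * σ * u) σ z * ψ u) /
          gaussDen μ σ z) atBot atTop) := by
  have hψ : IntegrableOn ψ (Icc (-1) 1) := Integrable.of_integral_ne_zero (by simp [hψint])
  simp_rw [setIntegral_gaussDen_mul_div_gaussDen hσ.ne']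
  have hslope : 0 < τ / σ := div_pos hτ hσ
  have ht : Tendsto (fun z => τ * (z - μ) / σ) atTop atTop :=
    (tendsto_atTop_add_const_right _ (-μ) tendsto_id).const_mul_atTop hslope |>.congr
      fun z => by simp only [id]; ring
  have ht' : Tendsto (fun z => -(τ * (z - μ) / σ)) atBot atTop :=
    (tendsto_atTop_add_const_right _ μ tendsto_neg_atBot_atTop).const_mul_atTop hslope |>.congr
      fun z => by ring
  refine ⟨fun ⟨δ, hδ, hA⟩ => ?_, fun ⟨δ, hδ, hA⟩ => ?_⟩
  · exact (tendsto_setIntegral_exp_mul_add_atTop (k := fun u => -(τ * u) ^ 2 / 2) isCompact_Icc continuous_id (by fun_prop) hψ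
      (fun u _ => hψnn u) measurableSet_Icc (Icc_subset_Icc (by linarith [hδ.1]) le_rfl) hδ.1
      (fun u hu => hu.1) hA).comp ht
  · refine ((tendsto_setIntegral_exp_mul_add_atTop (k := fun u => -(τ * u) ^ 2 / 2) isCompact_Icc continuous_neg (by fun_prop) hψ
      (fun u _ => hψnn u) measurableSet_Icc (Icc_subset_Icc le_rfl (by linarith [hδ.1])) hδ.1
      (fun u hu => le_neg_of_le_neg hu.2) hA).comp ht').congr fun z => ?_
    simp only [Function.comp_apply, neg_mul_neg]

theorem stmt10
    (μ σ τ : ℝ) (hσ : 0 < σ) (hτ : 0 < τ) (ψ : ℝ → ℝ)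
    (hψm : Measurable ψ) (hψnn : ∀ u, 0 ≤ ψ u)
    (hψsupp : ∀ u, u ∉ Icc (-1 : ℝ) 1 → ψ u = 0)
    (hψint : ∫ u in Icc (-1 : ℝ) 1, ψ u = 1) :
    ((∃ δ, δ ∈ Ioc (0 : ℝ) 1 ∧ 0 < ∫ u in Icc δ 1, ψ u) →
      Tendsto
        (fun z => (∫ u in Icc (-1 : ℝ) 1, gaussDen (μ + τ * σ * u) σ z * ψ u) /
          gaussDen μ σ z) atTop atTop) ∧
    ((∃ δ, δ ∈ Ioc (0 : ℝ) 1 ∧ 0 < ∫ u in Icc (-1 : ℝ) (-δ), ψ u) →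
      Tendsto
        (fun z => (∫ u in Icc (-1 : ℝ) 1, gaussDen (μ + τ * σ * u) σ z * ψ u) /
          gaussDen μ σ z) atBot atTop) :=
  stmt10_general μ σ τ hσ hτ ψ hψnn hψint
end
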